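/- arXiv:1806.11347 — 3 statements merged into one kernel-verified Lean document; each statement's English description precedes it below -/
import Mathlib

section
/- Let ρ be a density matrix on ℂ^d with positive semidefinite square root √ρ, and let A, B be Hermitian d×d complex matrices. Let M be any d×d complex matrix satisfying Tr(M†M) = 1 and Tr(M†·√ρ) = 0. Then for each sign s ∈ {+1, −1}: ΔA² + ΔB² + s·i·Tr(ρ[A,B]) ≥ |Tr(M†·(A + s·i·B)·√ρ)|². -/
/-!
Put `C = A + s·i·B`, `c = Tr(ρC)` and `V = (C - c)√ρ`. Since `Tr(M†√ρ) = 0`, the right-hand side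
is `|Tr(M†V)|²`, which by Cauchy–Schwarz for the Hilbert–Schmidt inner product is at most
`Tr(M†M) Tr(V†V) = Tr(ρ C†C) - |c|²`. For `s = ±1` this is exactly the left-hand side, because
`C†C = A² + B² + s·i·[A, B]` and `|c|² = ⟨A⟩² + ⟨B⟩²`.
-/

open Matrix Complex
open scoped ComplexOrder

namespace Matrix

section RCLike

variable {n 𝕜 : Type*} [Fintype n] [RCLike 𝕜]

theorem norm_trace_conjTranspose_mul_sq_le (M N : Matrix n n 𝕜) :
    ‖(Mᴴ * N).trace‖ ^ 2 ≤ RCLike.re (Mᴴ * M).trace * RCLike.re (Nᴴ * N).trace := by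
  classical
  let := (1 : Matrix n n 𝕜).toMatrixSeminormedAddCommGroup PosSemidef.one
  let := (1 : Matrix n n 𝕜).toMatrixInnerProductSpace PosSemidef.one
  have inner_eq (X Y : Matrix n n 𝕜) : inner 𝕜 X Y = (Xᴴ * Y).trace := by
    change (Y * 1 * Xᴴ).trace = _
    rw [mul_one, trace_mul_comm]
  have h := inner_mul_inner_self_le (𝕜 := 𝕜) M N
  rw [norm_inner_symm N M] at h
  simpa only [sq, inner_eq] using h

theorem IsHermitian.mul_self {R : Matrix n n 𝕜} (hR : R.IsHermitian) : (R * R).IsHermitian := by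
  simpa only [hR.eq] using isHermitian_conjTranspose_mul_self R

theorem IsHermitian.star_trace_mul {ρ : Matrix n n 𝕜} (hρ : ρ.IsHermitian) (C : Matrix n n 𝕜) :
    star (ρ * C).trace = (ρ * Cᴴ).trace := by
  rw [← trace_conjTranspose, conjTranspose_mul, hρ.eq, trace_mul_comm]

theorem IsHermitian.trace_mul_conjTranspose_mul_self_sub_trace_smul [DecidableEq n]
    {ρ : Matrix n n 𝕜} (hρ : ρ.IsHermitian) (hρtr : ρ.trace = 1) (C : Matrix n n 𝕜) :
    (ρ * ((C - (ρ * C).trace • 1)ᴴ * (C - (ρ * C).trace • 1))).trace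
      = (ρ * (Cᴴ * C)).trace - star (ρ * C).trace * (ρ * C).trace := by
  set c := (ρ * C).trace
  have hc : (ρ * Cᴴ).trace = star c := (hρ.star_trace_mul C).symm
  simp only [conjTranspose_sub, conjTranspose_smul, conjTranspose_one, sub_mul, mul_sub,
    Matrix.smul_mul, Matrix.mul_smul, Matrix.one_mul, Matrix.mul_one, trace_sub, trace_smul,
    hρtr, hc, smul_eq_mul]
  ring

theorem IsHermitian.trace_conjTranspose_mul_self_mul {R : Matrix n n 𝕜} (hR : R.IsHermitian)
    (X : Matrix n n 𝕜) : ((X * R)ᴴ * (X * R)).trace = (R * R * (Xᴴ * X)).trace := by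
  rw [conjTranspose_mul, hR.eq, ← Matrix.mul_assoc, trace_mul_comm]
  simp only [Matrix.mul_assoc]

theorem sq_norm_trace_conjTranspose_mul_mul_le {ρ R M : Matrix n n 𝕜} (hR : R.IsHermitian)
    (hRsq : R * R = ρ) (hρtr : ρ.trace = 1) (hM1 : (Mᴴ * M).trace = 1)
    (hM2 : (Mᴴ * R).trace = 0) (C : Matrix n n 𝕜) :
    ‖(Mᴴ * (C * R)).trace‖ ^ 2 ≤ RCLike.re (ρ * (Cᴴ * C)).trace - ‖(ρ * C).trace‖ ^ 2 := by
  classical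
  have hρ : ρ.IsHermitian := hRsq ▸ hR.mul_self
  set c := (ρ * C).trace
  set V := (C - c • 1) * R
  have hV : (Mᴴ * V).trace = (Mᴴ * (C * R)).trace := by
    simp [V, Matrix.sub_mul, Matrix.mul_sub, trace_sub, hM2]
  have hVV : (Vᴴ * V).trace = (ρ * (Cᴴ * C)).trace - star c * c := by
    rw [hR.trace_conjTranspose_mul_self_mul, hRsq,
      hρ.trace_mul_conjTranspose_mul_self_sub_trace_smul hρtr]
  calc ‖(Mᴴ * (C * R)).trace‖ ^ 2 = ‖(Mᴴ * V).trace‖ ^ 2 := by rw [hV]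
    _ ≤ RCLike.re (Mᴴ * M).trace * RCLike.re (Vᴴ * V).trace :=
      norm_trace_conjTranspose_mul_sq_le M V
    _ = _ := by
      rw [hM1, hVV, RCLike.one_re, one_mul, map_sub, RCLike.star_def, RCLike.conj_mul,
        ← RCLike.ofReal_pow, RCLike.ofReal_re]

end RCLike

theorem IsHermitian.conjTranspose_mul_self_add_smul_I {n : Type*} [Fintype n]
    {A B : Matrix n n ℂ} (hA : A.IsHermitian) (hB : B.IsHermitian) {s : ℂ} (hs : star s = s) :
    (A + (s * I) • B)ᴴ * (A + (s * I) • B)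
      = A * A + (s * s) • (B * B) + (s * I) • (A * B - B * A) := by
  have hsI : star (s * I) = -(s * I) := by
    rw [star_mul', hs, Complex.star_def, conj_I, mul_neg]
  have hsI_mul : s * I * -(s * I) = s * s := by linear_combination (-s ^ 2) * I_sq
  rw [conjTranspose_add, conjTranspose_smul, hA.eq, hB.eq, hsI]
  simp only [Matrix.add_mul, Matrix.mul_add, Matrix.smul_mul, Matrix.mul_smul, smul_add, smul_smul,
    hsI_mul]
  module

end Matrix

theorem Complex.sq_norm_add_mul_I_mul {a b s : ℂ} (ha : star a = a) (hb : star b = b)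
    (hs : star s = s) : ‖a + s * I * b‖ ^ 2 = (a ^ 2 + s * s * b ^ 2).re := by
  have hstar : star (a + s * I * b) = a - s * I * b := by
    rw [star_add, star_mul', star_mul', ha, hb, hs, Complex.star_def, conj_I]
    ring
  rw [Complex.sq_norm, ← ofReal_re (normSq _), ← mul_conj, ← Complex.star_def, hstar]
  congr 1
  linear_combination (-s ^ 2 * b ^ 2) * I_sq

theorem stmt3_general {d : ℕ} (ρ R : Matrix (Fin d) (Fin d) ℂ)
    (hρtr : ρ.trace = 1)
    (hR : R.PosSemidef) (hRsq : R * R = ρ)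
    (A B : Matrix (Fin d) (Fin d) ℂ) (hA : A.IsHermitian) (hB : B.IsHermitian)
    (M : Matrix (Fin d) (Fin d) ℂ)
    (hM1 : (Mᴴ * M).trace = 1) (hM2 : (Mᴴ * R).trace = 0)
    (s : ℂ) (hs : s = 1 ∨ s = -1) :
    ((ρ * (A * A)).trace - (ρ * A).trace ^ 2).re
      + ((ρ * (B * B)).trace - (ρ * B).trace ^ 2).re
      + (s * Complex.I * (ρ * (A * B - B * A)).trace).re
    ≥ ‖(Mᴴ * ((A + (s * Complex.I) • B) * R)).trace‖ ^ 2 := by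
  have hs_real : star s = s := by rcases hs with rfl | rfl <;> simp
  have hs_sq : s * s = 1 := by rcases hs with rfl | rfl <;> norm_num
  have hρ : ρ.IsHermitian := hRsq ▸ hR.isHermitian.mul_self
  have hmean : (ρ * (A + (s * I) • B)).trace = (ρ * A).trace + s * I * (ρ * B).trace := by
    rw [Matrix.mul_add, Matrix.mul_smul, trace_add, trace_smul, smul_eq_mul]
  have key := sq_norm_trace_conjTranspose_mul_mul_le hR.isHermitian hRsq hρtr hM1 hM2
    (A + (s * I) • B)
  rw [hA.conjTranspose_mul_self_add_smul_I hB hs_real, hs_sq, one_smul, hmean,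
    sq_norm_add_mul_I_mul (by rw [hρ.star_trace_mul, hA.eq]) (by rw [hρ.star_trace_mul, hB.eq])
      hs_real, hs_sq, one_mul] at key
  simp only [Matrix.mul_add, Matrix.mul_smul, trace_add, trace_smul, smul_eq_mul, add_re,
    sub_re, RCLike.re_to_complex] at key ⊢
  linarith

/-- mixed-state stronger uncertainty relation. For a density matrix `ρ` with
positive semidefinite square root `R` (`R * R = ρ`), Hermitian `A B`, and any matrix `M` with
`Tr(M†M) = 1` and `Tr(M† R) = 0`, for each sign `s = ±1`:
`ΔA² + ΔB² + s·i·Tr(ρ[A,B]) ≥ |Tr(M†(A + s·i·B)R)|²`. -/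
theorem stmt3 {d : ℕ} (ρ R : Matrix (Fin d) (Fin d) ℂ)
    (hρ : ρ.PosSemidef) (hρtr : ρ.trace = 1)
    (hR : R.PosSemidef) (hRsq : R * R = ρ)
    (A B : Matrix (Fin d) (Fin d) ℂ) (hA : A.IsHermitian) (hB : B.IsHermitian)
    (M : Matrix (Fin d) (Fin d) ℂ)
    (hM1 : (Mᴴ * M).trace = 1) (hM2 : (Mᴴ * R).trace = 0)
    (s : ℂ) (hs : s = 1 ∨ s = -1) :
    ((ρ * (A * A)).trace - (ρ * A).trace ^ 2).re
      + ((ρ * (B * B)).trace - (ρ * B).trace ^ 2).re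
      + (s * Complex.I * (ρ * (A * B - B * A)).trace).re
    ≥ ‖(Mᴴ * ((A + (s * Complex.I) • B) * R)).trace‖ ^ 2 :=
  stmt3_general ρ R hρtr hR hRsq A B hA hB M hM1 hM2 s hs
end

section
/- Let ψ ∈ ℂ^d be a unit vector and A, B Hermitian d×d complex matrices. Set C = A − ⟨ψ, Aψ⟩·I, D = B − ⟨ψ, Bψ⟩·I, choose the sign s ∈ {+1, −1} such that s·i·⟨ψ, [A,B]ψ⟩ = −|⟨ψ, [A,B]ψ⟩|, and let K = (C − s·i·D)(C + s·i·D). Then ΔA² + ΔB² ≤ |⟨ψ, [A,B]ψ⟩| + w(K), where w(K) = sup over unit vectors φ ∈ ℂ^d of |⟨φ, Kφ⟩| is the numerical radius of K (which for the positive semidefinite Hermitian K equals its operator norm, i.e., its largest eigenvalue). -/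
open Matrix Complex

/-!
Since `s² = 1`, `(s i)² = -1`, and as `C, D` differ from `A, B` by scalars, `[C, D] = [A, B]`;
hence `K = C² + D² + s i [A, B]`. Taking the expectation in the unit vector `ψ` gives
`⟨ψ, Kψ⟩ = ΔA² + ΔB² + s i ⟨ψ, [A,B]ψ⟩ = ΔA² + ΔB² - |⟨ψ, [A,B]ψ⟩|` by the choice of `s`,
and `ψ` is itself one of the unit vectors over which `w(K)` is the supremum, so
`Re ⟨ψ, Kψ⟩ ≤ |⟨ψ, Kψ⟩| ≤ w(K)`. The supremum is finite since `|⟨φ, Kφ⟩| ≤ ‖K‖` for unit `φ`.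
-/

section Algebra

variable {S R : Type*} [CommRing S] [Ring R] [Algebra S R]

theorem mul_sub_smul_mul_add_smul {t : S} (ht : t * t = -1) (x y : R) :
    (x - t • y) * (x + t • y) = x * x + y * y + t • (x * y - y * x) := by
  simp only [mul_add, sub_mul, smul_mul_assoc, mul_smul_comm]
  linear_combination (norm := module) -ht • (y * y)

theorem commutator_sub_smul_one (x y : R) (a b : S) :
    (x - a • 1) * (y - b • 1) - (y - b • 1) * (x - a • 1) = x * y - y * x := by
  simp only [mul_sub, sub_mul, smul_mul_assoc, mul_smul_comm, one_mul, mul_one]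
  module

end Algebra

theorem star_dotProduct_mulVec_sub_smul_one_mul {n R : Type*} [Fintype n] [DecidableEq n]
    [CommRing R] [StarRing R] {ψ : n → R} (hψ : star ψ ⬝ᵥ ψ = 1) (A B : Matrix n n R) :
    star ψ ⬝ᵥ ((A - (star ψ ⬝ᵥ A *ᵥ ψ) • 1) * (B - (star ψ ⬝ᵥ B *ᵥ ψ) • 1)) *ᵥ ψ
      = star ψ ⬝ᵥ (A * B) *ᵥ ψ - (star ψ ⬝ᵥ A *ᵥ ψ) * (star ψ ⬝ᵥ B *ᵥ ψ) := by
  simp only [Matrix.mul_sub, Matrix.sub_mul, Matrix.smul_mul, Matrix.mul_smul, Matrix.one_mul,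
    Matrix.mul_one, Matrix.sub_mulVec, Matrix.smul_mulVec, Matrix.one_mulVec, dotProduct_sub,
    dotProduct_smul, smul_eq_mul, hψ]
  ring

section NumericalRadius

variable {𝕜 n : Type*} [RCLike 𝕜] [Fintype n]

theorem norm_toLp_sq_eq_re_star_dotProduct (φ : n → 𝕜) :
    ‖WithLp.toLp 2 φ‖ ^ 2 = RCLike.re (star φ ⬝ᵥ φ) := by
  rw [← inner_self_eq_norm_sq (𝕜 := 𝕜), EuclideanSpace.inner_toLp_toLp, dotProduct_comm]

variable [DecidableEq n]

theorem norm_star_dotProduct_mulVec_le (K : Matrix n n 𝕜) (φ : n → 𝕜) :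
    ‖star φ ⬝ᵥ K *ᵥ φ‖ ≤ ‖toEuclideanCLM (n := n) (𝕜 := 𝕜) K‖ * ‖WithLp.toLp 2 φ‖ ^ 2 := by
  set x := WithLp.toLp 2 φ
  set T := toEuclideanCLM (n := n) (𝕜 := 𝕜) K
  have hinner : star φ ⬝ᵥ K *ᵥ φ = inner 𝕜 x (T x) := by
    rw [toEuclideanCLM_toLp, EuclideanSpace.inner_toLp_toLp, dotProduct_comm]
  calc ‖star φ ⬝ᵥ K *ᵥ φ‖ ≤ ‖x‖ * ‖T x‖ := hinner ▸ norm_inner_le_norm _ _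
    _ ≤ ‖x‖ * (‖T‖ * ‖x‖) := by gcongr; exact T.le_opNorm x
    _ = ‖T‖ * ‖x‖ ^ 2 := by ring

theorem bddAbove_norm_star_dotProduct_mulVec (K : Matrix n n 𝕜) :
    BddAbove {x : ℝ | ∃ φ : n → 𝕜, star φ ⬝ᵥ φ = 1 ∧ x = ‖star φ ⬝ᵥ K *ᵥ φ‖} := by
  refine ⟨‖toEuclideanCLM (n := n) (𝕜 := 𝕜) K‖, ?_⟩
  rintro x ⟨φ, hφ, rfl⟩
  simpa [norm_toLp_sq_eq_re_star_dotProduct, hφ] using norm_star_dotProduct_mulVec_le K φ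

end NumericalRadius

theorem stmt8_general {d : ℕ} (ψ : Fin d → ℂ) (hψ : star ψ ⬝ᵥ ψ = 1)
    (A B : Matrix (Fin d) (Fin d) ℂ)
    (s : ℂ) (hs : s = 1 ∨ s = -1)
    (hsign : s * Complex.I * (star ψ ⬝ᵥ (A * B - B * A).mulVec ψ)
      = -(‖star ψ ⬝ᵥ (A * B - B * A).mulVec ψ‖ : ℂ))
    (C D K : Matrix (Fin d) (Fin d) ℂ)
    (hC : C = A - (star ψ ⬝ᵥ A.mulVec ψ) • (1 : Matrix (Fin d) (Fin d) ℂ))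
    (hD : D = B - (star ψ ⬝ᵥ B.mulVec ψ) • (1 : Matrix (Fin d) (Fin d) ℂ))
    (hK : K = (C - (s * Complex.I) • D) * (C + (s * Complex.I) • D)) :
    (star ψ ⬝ᵥ (A * A).mulVec ψ - (star ψ ⬝ᵥ A.mulVec ψ) ^ 2).re
      + (star ψ ⬝ᵥ (B * B).mulVec ψ - (star ψ ⬝ᵥ B.mulVec ψ) ^ 2).re
    ≤ ‖star ψ ⬝ᵥ (A * B - B * A).mulVec ψ‖
      + sSup {x : ℝ | ∃ φ : Fin d → ℂ, star φ ⬝ᵥ φ = 1 ∧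
          x = ‖star φ ⬝ᵥ K.mulVec φ‖} := by
  have hsI : s * I * (s * I) = -1 := by rcases hs with rfl | rfl <;> simp
  have hK' : K = C * C + D * D + (s * I) • (A * B - B * A) := by
    rw [hK, mul_sub_smul_mul_add_smul hsI, hC, hD, commutator_sub_smul_one]
  have hexpK : star ψ ⬝ᵥ K *ᵥ ψ
      = (star ψ ⬝ᵥ (A * A) *ᵥ ψ - (star ψ ⬝ᵥ A *ᵥ ψ) ^ 2)
        + (star ψ ⬝ᵥ (B * B) *ᵥ ψ - (star ψ ⬝ᵥ B *ᵥ ψ) ^ 2)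
        + s * I * (star ψ ⬝ᵥ (A * B - B * A) *ᵥ ψ) := by
    rw [hK', add_mulVec, add_mulVec, smul_mulVec, dotProduct_add, dotProduct_add,
      dotProduct_smul, hC, hD, star_dotProduct_mulVec_sub_smul_one_mul hψ,
      star_dotProduct_mulVec_sub_smul_one_mul hψ, smul_eq_mul, sq, sq]
  calc _ = (star ψ ⬝ᵥ K *ᵥ ψ).re + ‖star ψ ⬝ᵥ (A * B - B * A) *ᵥ ψ‖ := by
        rw [hexpK, hsign]; simp
    _ ≤ _ := by
      rw [add_comm]
      gcongr
      exact (re_le_norm _).trans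
        (le_csSup (bddAbove_norm_star_dotProduct_mulVec K) ⟨ψ, hψ, rfl⟩)

/-- reverse uncertainty relation via the numerical radius.  With `K` the
uncertainty matrix for a pure state `ψ` (sign chosen so that
`s·i·⟨ψ,[A,B]ψ⟩ = -|⟨ψ,[A,B]ψ⟩|`), one has `ΔA² + ΔB² ≤ |⟨ψ,[A,B]ψ⟩| + w(K)`, where
`w(K) = sup {|⟨φ,Kφ⟩| : ‖φ‖ = 1}` is the numerical radius of `K`. -/
theorem stmt8 {d : ℕ} (ψ : Fin d → ℂ) (hψ : star ψ ⬝ᵥ ψ = 1)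
    (A B : Matrix (Fin d) (Fin d) ℂ) (hA : A.IsHermitian) (hB : B.IsHermitian)
    (s : ℂ) (hs : s = 1 ∨ s = -1)
    (hsign : s * Complex.I * (star ψ ⬝ᵥ (A * B - B * A).mulVec ψ)
      = -(‖star ψ ⬝ᵥ (A * B - B * A).mulVec ψ‖ : ℂ))
    (C D K : Matrix (Fin d) (Fin d) ℂ)
    (hC : C = A - (star ψ ⬝ᵥ A.mulVec ψ) • (1 : Matrix (Fin d) (Fin d) ℂ))
    (hD : D = B - (star ψ ⬝ᵥ B.mulVec ψ) • (1 : Matrix (Fin d) (Fin d) ℂ))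
    (hK : K = (C - (s * Complex.I) • D) * (C + (s * Complex.I) • D)) :
    (star ψ ⬝ᵥ (A * A).mulVec ψ - (star ψ ⬝ᵥ A.mulVec ψ) ^ 2).re
      + (star ψ ⬝ᵥ (B * B).mulVec ψ - (star ψ ⬝ᵥ B.mulVec ψ) ^ 2).re
    ≤ ‖star ψ ⬝ᵥ (A * B - B * A).mulVec ψ‖
      + sSup {x : ℝ | ∃ φ : Fin d → ℂ, star φ ⬝ᵥ φ = 1 ∧
          x = ‖star φ ⬝ᵥ K.mulVec φ‖} :=
  stmt8_general ψ hψ A B s hs hsign C D K hC hD hK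
end

section
/- Let ρ be a density matrix on ℂ^d and A, B, C Hermitian d×d complex matrices. Then ΔA² + ΔB² + ΔC² ≥ (1/2)·(|Tr(ρ[A,B])| + |Tr(ρ[B,C])| + |Tr(ρ[A,C])|), where each trace of a commutator is purely imaginary and |·| is the complex modulus. -/
/-!
Write `A₀ = A - ⟨A⟩` for the centred observables; they have the same commutators and
`Tr(ρ A₀²) = ΔA²`. Positivity of `Tr(ρ XᴴX)` for `X = A₀ ± i B₀` gives
`ΔA² + ΔB² ∓ i Tr(ρ[A,B]) ≥ 0`, and `Tr(ρ[A,B])` is purely imaginary, so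
`|Tr(ρ[A,B])| ≤ ΔA² + ΔB²`. Summing over the three pairs gives the theorem.
-/

open Matrix Complex
open scoped ComplexOrder

theorem commutator_sub_smul_one_s16 {R M : Type*} [CommRing R] [Ring M] [Algebra R M]
    (A B : M) (a b : R) :
    (A - a • 1) * (B - b • 1) - (B - b • 1) * (A - a • 1) = A * B - B * A := by
  simp only [sub_mul, mul_sub, smul_mul_assoc, mul_smul_comm, one_mul, mul_one]
  module

namespace Matrix

variable {n : Type*} [Fintype n]

theorem PosSemidef.trace_mul_conjTranspose_mul_self_nonneg {R : Type*} [CommRing R]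
    [PartialOrder R] [StarRing R] [StarOrderedRing R] {ρ : Matrix n n R} (hρ : ρ.PosSemidef)
    (X : Matrix n n R) : 0 ≤ (ρ * (Xᴴ * X)).trace := by
  rw [← Matrix.mul_assoc, trace_mul_comm, ← Matrix.mul_assoc]
  exact (hρ.mul_mul_conjTranspose_same X).trace_nonneg

section CommRing

variable {R : Type*} [CommRing R]

theorem IsHermitian.isSelfAdjoint_trace_mul [StarRing R] {ρ A : Matrix n n R}
    (hρ : ρ.IsHermitian) (hA : A.IsHermitian) : IsSelfAdjoint (ρ * A).trace := by
  rw [IsSelfAdjoint, ← trace_conjTranspose, conjTranspose_mul, hρ.eq, hA.eq, trace_mul_comm]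

theorem IsHermitian.star_trace_mul_commutator [StarRing R] {ρ A B : Matrix n n R}
    (hρ : ρ.IsHermitian) (hA : A.IsHermitian) (hB : B.IsHermitian) :
    star (ρ * (A * B - B * A)).trace = -(ρ * (A * B - B * A)).trace := by
  rw [← trace_conjTranspose, conjTranspose_mul, conjTranspose_sub, conjTranspose_mul,
    conjTranspose_mul, hρ.eq, hA.eq, hB.eq, trace_mul_comm, ← neg_sub, Matrix.mul_neg,
    trace_neg]

variable [DecidableEq n]

theorem IsHermitian.sub_smul_one [StarRing R] {A : Matrix n n R} (hA : A.IsHermitian) {c : R}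
    (hc : IsSelfAdjoint c) : (A - c • 1).IsHermitian :=
  IsSelfAdjoint.sub hA (hc.smul (.one _))

theorem trace_mul_sub_smul_one_mul_self {ρ : Matrix n n R} (hρ : ρ.trace = 1)
    (A : Matrix n n R) :
    (ρ * ((A - (ρ * A).trace • 1) * (A - (ρ * A).trace • 1))).trace
      = (ρ * (A * A)).trace - (ρ * A).trace ^ 2 := by
  simp only [sub_mul, mul_sub, Matrix.smul_mul, Matrix.mul_smul, Matrix.mul_one, Matrix.one_mul,
    trace_sub, trace_smul, hρ, smul_eq_mul]
  ring

end CommRing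

theorem IsHermitian.conjTranspose_mul_self_add_ofReal_mul_I_smul {A B : Matrix n n ℂ}
    (hA : A.IsHermitian) (hB : B.IsHermitian) (s : ℝ) :
    (A + (s * I) • B)ᴴ * (A + (s * I) • B)
      = A * A + (s * I) • (A * B - B * A) + ((s ^ 2 : ℝ) : ℂ) • (B * B) := by
  rw [conjTranspose_add, conjTranspose_smul, hA.eq, hB.eq]
  simp only [add_mul, mul_add, Matrix.smul_mul, Matrix.mul_smul, smul_smul, star_mul',
    Complex.star_def, conj_ofReal, conj_I]
  have hI : (s * I * (s * -I) : ℂ) = ((s ^ 2 : ℝ) : ℂ) := by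
    push_cast
    linear_combination (-(s : ℂ) ^ 2) * I_sq
  rw [hI, mul_neg, neg_smul, smul_sub]
  abel

theorem PosSemidef.norm_trace_mul_commutator_le {ρ A B : Matrix n n ℂ} (hρ : ρ.PosSemidef)
    (hA : A.IsHermitian) (hB : B.IsHermitian) :
    ‖(ρ * (A * B - B * A)).trace‖ ≤ (ρ * (A * A)).trace.re + (ρ * (B * B)).trace.re := by
  set c := (ρ * (A * B - B * A)).trace
  have hpos (s : ℝ) :
      0 ≤ (ρ * (A * A)).trace.re + s ^ 2 * (ρ * (B * B)).trace.re - s * c.im := by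
    have h := (Complex.nonneg_iff.mp
      (hρ.trace_mul_conjTranspose_mul_self_nonneg (A + (s * I) • B))).1
    rw [hA.conjTranspose_mul_self_add_ofReal_mul_I_smul hB s] at h
    simp only [Matrix.mul_add, Matrix.mul_smul, trace_add, trace_smul, smul_eq_mul, add_re,
      mul_re, mul_im, ofReal_re, ofReal_im, I_re, I_im] at h
    linarith
  have hre : c.re = 0 := by
    have h := congrArg re (hρ.1.star_trace_mul_commutator hA hB)
    simp only [Complex.star_def, conj_re, neg_re] at h
    linarith
  rw [← abs_im_eq_norm.mpr hre, abs_le]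
  constructor <;> nlinarith [hpos 1, hpos (-1)]

theorem PosSemidef.norm_trace_mul_commutator_le_variance_add_variance [DecidableEq n]
    {ρ A B : Matrix n n ℂ} (hρ : ρ.PosSemidef) (hρtr : ρ.trace = 1)
    (hA : A.IsHermitian) (hB : B.IsHermitian) :
    ‖(ρ * (A * B - B * A)).trace‖
      ≤ ((ρ * (A * A)).trace - (ρ * A).trace ^ 2).re
        + ((ρ * (B * B)).trace - (ρ * B).trace ^ 2).re := by
  have hA₀ := hA.sub_smul_one (hρ.1.isSelfAdjoint_trace_mul hA)
  have hB₀ := hB.sub_smul_one (hρ.1.isSelfAdjoint_trace_mul hB)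
  simpa only [commutator_sub_smul_one_s16, trace_mul_sub_smul_one_mul_self hρtr]
    using hρ.norm_trace_mul_commutator_le hA₀ hB₀

end Matrix

/-- three-observable sum uncertainty relation: for a density matrix `ρ` and
Hermitian `A B C`, `ΔA² + ΔB² + ΔC² ≥ (1/2)(|Tr(ρ[A,B])| + |Tr(ρ[B,C])| + |Tr(ρ[A,C])|)`. -/
theorem stmt16 {d : ℕ} (ρ : Matrix (Fin d) (Fin d) ℂ)
    (hρ : ρ.PosSemidef) (hρtr : ρ.trace = 1)
    (A B C : Matrix (Fin d) (Fin d) ℂ)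
    (hA : A.IsHermitian) (hB : B.IsHermitian) (hC : C.IsHermitian) :
    ((ρ * (A * A)).trace - (ρ * A).trace ^ 2).re
      + ((ρ * (B * B)).trace - (ρ * B).trace ^ 2).re
      + ((ρ * (C * C)).trace - (ρ * C).trace ^ 2).re
    ≥ (1 / 2) * (‖(ρ * (A * B - B * A)).trace‖
        + ‖(ρ * (B * C - C * B)).trace‖
        + ‖(ρ * (A * C - C * A)).trace‖) := by
  have hAB := hρ.norm_trace_mul_commutator_le_variance_add_variance hρtr hA hB
  have hBC := hρ.norm_trace_mul_commutator_le_variance_add_variance hρtr hB hC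
  have hAC := hρ.norm_trace_mul_commutator_le_variance_add_variance hρtr hA hC
  linarith
end
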